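/- For any R-module A with S-completion Λ_S(A), the following are equivalent: (i) Λ_S(A) is S-complete; (iii) for every s ∈ S the kernel U_s of the projection Λ_S(A) → A/sA equals s·Λ_S(A); (vi) the cokernel of λ_{S,A} : A → Λ_S(A) is S-divisible. -/

import Mathlib

open Submodule

/-- The submodule `s·A` of an `R`-module `A`. -/
def smulTop (R : Type) [CommRing R] (s : R)
    (A : Type) [AddCommGroup A] [Module R A] : Submodule R A :=
  Ideal.span {s} • (⊤ : Submodule R A)

/-- The natural projection `A/tA → A/sA` when `s ∣ t`. -/
def transMap (R : Type) [CommRing R]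
    (A : Type) [AddCommGroup A] [Module R A] (s t : R) (h : s ∣ t) :
    (A ⧸ smulTop R t A) →ₗ[R] A ⧸ smulTop R s A :=
  Submodule.mapQ _ _ LinearMap.id (by
    rw [Submodule.comap_id]
    exact Submodule.smul_mono (Ideal.span_singleton_le_span_singleton.mpr h) le_rfl)

/-- The S-completion `Λ_S(A) = lim_{s ∈ S} A/sA`, realized as the submodule of compatible
families in `∏_{s ∈ S} A/sA`. -/
def sCompletion (R : Type) [CommRing R] (S : Submonoid R)
    (A : Type) [AddCommGroup A] [Module R A] :
    Submodule R (∀ s : S, A ⧸ smulTop R (s : R) A) where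
  carrier := {x | ∀ (s t : S) (h : (s : R) ∣ (t : R)), transMap R A s t h (x t) = x s}
  add_mem' := by
    intro x y hx hy s t h
    rw [Pi.add_apply, Pi.add_apply, map_add, hx s t h, hy s t h]
  zero_mem' := by
    intro s t h
    rw [Pi.zero_apply, Pi.zero_apply, map_zero]
  smul_mem' := by
    intro r x hx s t h
    rw [Pi.smul_apply, Pi.smul_apply, map_smul, hx s t h]

theorem mem_sCompletion (R : Type) [CommRing R] (S : Submonoid R)
    (A : Type) [AddCommGroup A] [Module R A]
    (x : ∀ s : S, A ⧸ smulTop R (s : R) A) :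
    x ∈ sCompletion R S A ↔
      ∀ (s t : S) (h : (s : R) ∣ (t : R)), transMap R A s t h (x t) = x s :=
  Iff.rfl

/-- The natural map `λ_{S,A} : A → Λ_S(A)`. -/
def lamMap (R : Type) [CommRing R] (S : Submonoid R)
    (A : Type) [AddCommGroup A] [Module R A] :
    A →ₗ[R] sCompletion R S A :=
  LinearMap.codRestrict (sCompletion R S A)
    (LinearMap.pi fun s : S => (smulTop R (s : R) A).mkQ)
    (by
      intro a s t h
      show transMap R A s t h ((smulTop R (t : R) A).mkQ a) = (smulTop R (s : R) A).mkQ a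
      simp only [transMap, Submodule.mkQ_apply, Submodule.mapQ_apply, LinearMap.id_apply])

/-! The diagonal `Λ_S(Λ_S(A)) → Λ_S(A)`, taking a compatible family `(z_t)_t` with
`z_t ∈ Λ_S(A)/tΛ_S(A)` to the family of the `t`-th components of the `z_t`, is a left inverse of
both `λ_{S,Λ_S(A)}` and `Λ_S(λ_{S,A})`. So (i) forces these two maps to agree, and evaluating them
at `s` on `U_s` gives `U_s ⊆ sΛ_S(A)`; conversely, if `U_t = tΛ_S(A)` for all `t`, the diagonal is
also a right inverse of `λ_{S,Λ_S(A)}`. For (iii) ⇔ (vi): `x - λ(a) ∈ U_s` whenever `a` lifts the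
`s`-component of `x`, so `x ≡ λ(a)` modulo `sΛ_S(A)` under (iii). -/

namespace sCompletion

variable {R : Type} [CommRing R] {S : Submonoid R}
  {A : Type} [AddCommGroup A] [Module R A] {B : Type} [AddCommGroup B] [Module R B]

lemma mem_smulTop_iff {s : R} {a : A} : a ∈ smulTop R s A ↔ ∃ b : A, s • b = a := by
  simp [smulTop, ideal_span_singleton_smul, mem_smul_pointwise_iff_exists]

lemma smul_mem_smulTop (s : R) (a : A) : s • a ∈ smulTop R s A :=
  mem_smulTop_iff.mpr ⟨a, rfl⟩

lemma smul_quotient_smulTop_eq_zero (s : R) (q : A ⧸ smulTop R s A) : s • q = 0 := by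
  induction q using Submodule.Quotient.induction_on with
  | H a => exact (Submodule.Quotient.mk_eq_zero _).mpr (smul_mem_smulTop s a)

lemma smulTop_le_comap (f : A →ₗ[R] B) (s : R) : smulTop R s A ≤ (smulTop R s B).comap f :=
  smul_top_le_comap_smul_top _ f

lemma transMap_mapQ (f : A →ₗ[R] B) {s t : R} (h : s ∣ t) (q : A ⧸ smulTop R t A) :
    transMap R B s t h (mapQ _ _ f (smulTop_le_comap f t) q)
      = mapQ _ _ f (smulTop_le_comap f s) (transMap R A s t h q) := by
  induction q using Submodule.Quotient.induction_on with
  | H a => rfl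

/-- The projection `Λ_S(A) → A/sA`; its kernel is the submodule `U_s`. -/
def proj (s : S) : sCompletion R S A →ₗ[R] A ⧸ smulTop R (s : R) A :=
  (LinearMap.proj s).comp (sCompletion R S A).subtype

lemma transMap_proj {s t : S} (h : (s : R) ∣ t) (x : sCompletion R S A) :
    transMap R A s t h (proj t x) = proj s x :=
  x.2 s t h

@[ext]
lemma ext {x y : sCompletion R S A} (h : ∀ t, proj t x = proj t y) : x = y :=
  Subtype.ext (funext h)

@[simp]
lemma proj_lamMap (s : S) (a : A) : proj s (lamMap R S A a) = Submodule.Quotient.mk a :=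
  rfl

lemma smulTop_le_ker_proj (s : S) :
    smulTop R (s : R) (sCompletion R S A) ≤ LinearMap.ker (proj s) := by
  intro x hx
  obtain ⟨y, rfl⟩ := mem_smulTop_iff.mp hx
  rw [LinearMap.mem_ker, map_smul, smul_quotient_smulTop_eq_zero]

def map (f : A →ₗ[R] B) : sCompletion R S A →ₗ[R] sCompletion R S B :=
  LinearMap.codRestrict (sCompletion R S B)
    (LinearMap.pi fun t : S => (mapQ _ _ f (smulTop_le_comap f t)).comp (proj t))
    (fun x s t h => by
      simp only [LinearMap.pi_apply, LinearMap.comp_apply, transMap_mapQ, transMap_proj])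

@[simp]
lemma proj_map (f : A →ₗ[R] B) (s : S) (x : sCompletion R S A) :
    proj s (map f x) = mapQ _ _ f (smulTop_le_comap f s) (proj s x) :=
  rfl

def projQuot (s : S) :
    sCompletion R S A ⧸ smulTop R (s : R) (sCompletion R S A) →ₗ[R] A ⧸ smulTop R (s : R) A :=
  liftQ _ (proj s) (smulTop_le_ker_proj s)

@[simp]
lemma projQuot_mk (s : S) (x : sCompletion R S A) :
    projQuot s (Submodule.Quotient.mk x) = proj s x :=
  rfl

lemma transMap_projQuot {s t : S} (h : (s : R) ∣ t)
    (q : sCompletion R S A ⧸ smulTop R (t : R) (sCompletion R S A)) :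
    transMap R A s t h (projQuot t q) = projQuot s (transMap R _ s t h q) := by
  induction q using Submodule.Quotient.induction_on with
  | H x => exact transMap_proj h x

def diag : sCompletion R S (sCompletion R S A) →ₗ[R] sCompletion R S A :=
  LinearMap.codRestrict (sCompletion R S A)
    (LinearMap.pi fun t : S => (projQuot t).comp (proj t))
    (fun z s t h => by
      simp only [LinearMap.pi_apply, LinearMap.comp_apply, transMap_projQuot, transMap_proj])

@[simp]
lemma proj_diag (t : S) (z : sCompletion R S (sCompletion R S A)) :
    proj t (diag z) = projQuot t (proj t z) :=
  rfl

lemma diag_lamMap (x : sCompletion R S A) : diag (lamMap R S (sCompletion R S A) x) = x := by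
  ext t
  rfl

lemma diag_map_lamMap (x : sCompletion R S A) : diag (map (lamMap R S A) x) = x := by
  ext t
  induction h : proj t x using Submodule.Quotient.induction_on with
  | H a => simp only [proj_diag, proj_map, h, mapQ_apply, projQuot_mk, proj_lamMap]

lemma lamMap_eq_map_lamMap_of_surjective
    (h : Function.Surjective (lamMap R S (sCompletion R S A))) :
    lamMap R S (sCompletion R S A) = map (lamMap R S A) := by
  have hinv : Function.RightInverse diag (lamMap R S (sCompletion R S A)) :=
    Function.LeftInverse.rightInverse_of_surjective diag_lamMap h
  ext1 x
  rw [← hinv (map (lamMap R S A) x), diag_map_lamMap]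

lemma ker_proj_le_smulTop_of_surjective
    (h : Function.Surjective (lamMap R S (sCompletion R S A))) (s : S) :
    LinearMap.ker (proj s) ≤ smulTop R (s : R) (sCompletion R S A) := by
  intro x hx
  have hs := congrArg (proj s) (LinearMap.congr_fun (lamMap_eq_map_lamMap_of_surjective h) x)
  rw [proj_lamMap, proj_map, LinearMap.mem_ker.mp hx, map_zero] at hs
  exact (Submodule.Quotient.mk_eq_zero _).mp hs

lemma lamMap_diag_of_ker_proj_le
    (h : ∀ s : S, LinearMap.ker (proj s) ≤ smulTop R (s : R) (sCompletion R S A))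
    (z : sCompletion R S (sCompletion R S A)) :
    lamMap R S (sCompletion R S A) (diag z) = z := by
  ext t
  obtain ⟨w, hw⟩ := Submodule.Quotient.mk_surjective _ (proj t z)
  rw [proj_lamMap, ← hw, Submodule.Quotient.eq]
  refine h t (LinearMap.mem_ker.mpr ?_)
  rw [map_sub, proj_diag, ← hw, projQuot_mk, sub_self]

lemma smul_surjective_of_ker_proj_le
    (h : ∀ s : S, LinearMap.ker (proj s) ≤ smulTop R (s : R) (sCompletion R S A)) (s : S) :
    Function.Surjective
      (fun x : sCompletion R S A ⧸ LinearMap.range (lamMap R S A) => (s : R) • x) := by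
  intro q
  obtain ⟨x, rfl⟩ := Submodule.Quotient.mk_surjective _ q
  obtain ⟨a, ha⟩ := Submodule.Quotient.mk_surjective _ (proj s x)
  have hker : x - lamMap R S A a ∈ LinearMap.ker (proj s) := by
    rw [LinearMap.mem_ker, map_sub, proj_lamMap, ha, sub_self]
  obtain ⟨y, hy⟩ := mem_smulTop_iff.mp (h s hker)
  refine ⟨Submodule.Quotient.mk y, ?_⟩
  dsimp only
  rw [← Submodule.Quotient.mk_smul, hy, Submodule.Quotient.eq, sub_sub_cancel_left]
  exact neg_mem ⟨a, rfl⟩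

lemma ker_proj_le_smulTop_of_smul_surjective
    (h : ∀ s : S, Function.Surjective
      (fun x : sCompletion R S A ⧸ LinearMap.range (lamMap R S A) => (s : R) • x)) (s : S) :
    LinearMap.ker (proj s) ≤ smulTop R (s : R) (sCompletion R S A) := by
  intro x hx
  obtain ⟨q, hq⟩ := h s (Submodule.Quotient.mk x)
  obtain ⟨y, rfl⟩ := Submodule.Quotient.mk_surjective _ q
  dsimp only at hq
  rw [← Submodule.Quotient.mk_smul, Submodule.Quotient.eq] at hq
  obtain ⟨c, hc⟩ := hq
  have hc_mem : c ∈ smulTop R (s : R) A := by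
    have hs := congrArg (proj s) hc
    rw [proj_lamMap, map_sub, LinearMap.mem_ker.mp hx, map_smul,
      smul_quotient_smulTop_eq_zero, sub_zero] at hs
    exact (Submodule.Quotient.mk_eq_zero _).mp hs
  obtain ⟨b, rfl⟩ := mem_smulTop_iff.mp hc_mem
  refine mem_smulTop_iff.mpr ⟨y - lamMap R S A b, ?_⟩
  rw [smul_sub, ← map_smul, hc, sub_sub_cancel]

end sCompletion

open sCompletion in
theorem sCompletion_complete_tfae (R : Type) [CommRing R] (S : Submonoid R)
    (A : Type) [AddCommGroup A] [Module R A] :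
    [ -- (i)
      Function.Surjective (lamMap R S (sCompletion R S A)),
      -- (iii)
      ∀ s : S, LinearMap.ker ((LinearMap.proj s).comp (sCompletion R S A).subtype)
        = smulTop R (s : R) (sCompletion R S A),
      -- (vi)
      ∀ s : S, Function.Surjective
        (fun x : (sCompletion R S A) ⧸ LinearMap.range (lamMap R S A) => (s : R) • x)
    ].TFAE := by
  tfae_have 1 → 2 := fun h s =>
    le_antisymm (ker_proj_le_smulTop_of_surjective h s) (smulTop_le_ker_proj s)
  tfae_have 2 → 1 := fun h z =>
    ⟨diag z, lamMap_diag_of_ker_proj_le (fun s => (h s).le) z⟩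
  tfae_have 2 → 3 := fun h => smul_surjective_of_ker_proj_le fun s => (h s).le
  tfae_have 3 → 2 := fun h s =>
    le_antisymm (ker_proj_le_smulTop_of_smul_surjective h s) (smulTop_le_ker_proj s)
  tfae_finish
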